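/- arXiv:0707.0240 — 2 statements merged into one kernel-verified Lean document; each statement's English description precedes it below -/
import Mathlib

section
/- Let C be a small category. Then the homotopy groupoid of the nerve Σ_*(Ĉ) of the category of fractions Ĉ of C (the localization of C inverting all its arrows) is isomorphic to the homotopy groupoid of the symmetric simplicial set Σ̃_*(C). -/
namespace PosetBundle

open CategoryTheory

universe v u

/-- A 1-simplex of the symmetric simplicial set `Σ̃_*(C)` of a category `C`:
a functor from the poset of nonempty subsets of `{0,1}` to `C`, i.e. a pair of arrows
with common codomain (the support). `t0` is the 0-face, `t1` the 1-face. -/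
structure CSimplex1 (C : Type u) [Category.{v} C] : Type (max u v) where
  t0 : C
  t1 : C
  s : C
  g0 : t0 ⟶ s
  g1 : t1 ⟶ s

/-- A 2-simplex of `Σ̃_*(C)`: a functor from the poset of nonempty subsets of
`{0,1,2}` to `C`. -/
structure CSimplex2 (C : Type u) [Category.{v} C] : Type (max u v) where
  v0 : C
  v1 : C
  v2 : C
  e01 : C
  e02 : C
  e12 : C
  top : C
  a001 : v0 ⟶ e01
  a101 : v1 ⟶ e01
  a002 : v0 ⟶ e02
  a202 : v2 ⟶ e02
  a112 : v1 ⟶ e12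
  a212 : v2 ⟶ e12
  b01 : e01 ⟶ top
  b02 : e02 ⟶ top
  b12 : e12 ⟶ top
  comm0 : a001 ≫ b01 = a002 ≫ b02
  comm1 : a101 ≫ b01 = a112 ≫ b12
  comm2 : a202 ≫ b02 = a212 ≫ b12

variable {C : Type u} [Category.{v} C]

/-- The face `∂₀` of a 2-simplex. -/
def CSimplex2.d0 (c : CSimplex2 C) : CSimplex1 C := ⟨c.v2, c.v1, c.e12, c.a212, c.a112⟩
/-- The face `∂₁` of a 2-simplex. -/
def CSimplex2.d1 (c : CSimplex2 C) : CSimplex1 C := ⟨c.v2, c.v0, c.e02, c.a202, c.a002⟩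
/-- The face `∂₂` of a 2-simplex. -/
def CSimplex2.d2 (c : CSimplex2 C) : CSimplex1 C := ⟨c.v1, c.v0, c.e01, c.a101, c.a001⟩

/-- Paths in the symmetric simplicial set `Σ̃_*(C)`: composable strings of 1-simplices
(the empty path at each object is included; it is identified with the degenerate
1-simplex by the homotopy relation below). -/
inductive CPath (C : Type u) [Category.{v} C] : C → C → Type (max u v) where
  | nil (a : C) : CPath C a a
  | cons {a : C} (s : CSimplex1 C) (p : CPath C a s.t1) : CPath C a s.t0

/-- Concatenation of paths. -/
def CPath.comp {a : C} : ∀ {b c : C}, CPath C a b → CPath C b c → CPath C a c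
  | _, _, p, .nil _ => p
  | _, _, p, .cons s q => .cons s (p.comp q)

/-- The path consisting of a single 1-simplex. -/
def CPath.single (s : CSimplex1 C) : CPath C s.t1 s.t0 := .cons s (.nil s.t1)

theorem CPath.nil_comp {a b : C} (p : CPath C a b) : (CPath.nil a).comp p = p := by
  induction p with
  | nil => simp [CPath.comp]
  | cons s p ih => simp [CPath.comp, ih]

theorem CPath.comp_assoc {a b c d : C} (p : CPath C a b) (q : CPath C b c) (r : CPath C c d) :
    (p.comp q).comp r = p.comp (q.comp r) := by
  induction r with
  | nil => simp [CPath.comp]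
  | cons s r ih => simp [CPath.comp, ih]

/-- Homotopy of paths in `Σ̃_*(C)`: the equivalence relation generated by replacing a
subpath `∂₁c` by `∂₀c * ∂₂c` for a 2-simplex `c` (and identifying the degenerate
1-simplex with the empty path, which plays the role of the unit). -/
inductive CHomotopy : ∀ {a b : C}, CPath C a b → CPath C a b → Prop where
  | refl {a b : C} (p : CPath C a b) : CHomotopy p p
  | symm {a b : C} {p q : CPath C a b} : CHomotopy p q → CHomotopy q p
  | trans {a b : C} {p q r : CPath C a b} : CHomotopy p q → CHomotopy q r → CHomotopy p r
  | comp_congr {a b c : C} {p p' : CPath C a b} {q q' : CPath C b c} :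
      CHomotopy p p' → CHomotopy q q' → CHomotopy (p.comp q) (p'.comp q')
  | step (c : CSimplex2 C) :
      CHomotopy (CPath.single c.d1) ((CPath.single c.d2).comp (CPath.single c.d0))
  | degen (a : C) : CHomotopy (CPath.single ⟨a, a, a, 𝟙 a, 𝟙 a⟩) (CPath.nil a)

/-- The homotopy groupoid `π₁(C)` of `Σ̃_*(C)`, as a category: objects are the objects
of `C`, morphisms are homotopy classes of paths. -/
structure HoSymCat (C : Type u) [Category.{v} C] : Type u where
  as : C

instance : Category.{max u v} (HoSymCat C) where
  Hom a b := Quot (@CHomotopy C _ a.as b.as)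
  id a := Quot.mk _ (CPath.nil a.as)
  comp p q := Quot.lift₂ (fun p q => Quot.mk _ (CPath.comp p q))
    (fun _ _ _ h => Quot.sound (CHomotopy.comp_congr (CHomotopy.refl _) h))
    (fun _ _ _ h => Quot.sound (CHomotopy.comp_congr h (CHomotopy.refl _))) p q
  id_comp f := by
    induction f using Quot.ind with
    | _ p => exact congrArg (Quot.mk _) (CPath.nil_comp p)
  comp_id f := by
    induction f using Quot.ind with
    | _ p => exact congrArg (Quot.mk _) (by simp [CPath.comp])
  assoc f g h := by
    induction f using Quot.ind with
    | _ p =>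
    induction g using Quot.ind with
    | _ q =>
    induction h using Quot.ind with
    | _ r => exact congrArg (Quot.mk _) (CPath.comp_assoc p q r)

/-- Paths in the nerve `Σ_*(D)` of a category `D`: composable strings of arrows
(1-simplices of the nerve). -/
inductive NPath (D : Type u) [Category.{v} D] : D → D → Type (max u v) where
  | nil (a : D) : NPath D a a
  | cons {a b c : D} (f : b ⟶ c) (p : NPath D a b) : NPath D a c

/-- Concatenation of paths in the nerve. -/
def NPath.comp {D : Type u} [Category.{v} D] {a : D} :
    ∀ {b c : D}, NPath D a b → NPath D b c → NPath D a c
  | _, _, p, .nil _ => p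
  | _, _, p, .cons f q => .cons f (p.comp q)

/-- The path consisting of a single arrow. -/
def NPath.single {D : Type u} [Category.{v} D] {a b : D} (f : a ⟶ b) : NPath D a b :=
  .cons f (.nil a)

theorem NPath.nil_comp {D : Type u} [Category.{v} D] {a b : D} (p : NPath D a b) :
    (NPath.nil a).comp p = p := by
  induction p with
  | nil => simp [NPath.comp]
  | cons f p ih => simp [NPath.comp, ih]

theorem NPath.comp_assoc {D : Type u} [Category.{v} D] {a b c d : D}
    (p : NPath D a b) (q : NPath D b c) (r : NPath D c d) :
    (p.comp q).comp r = p.comp (q.comp r) := by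
  induction r with
  | nil => simp [NPath.comp]
  | cons f r ih => simp [NPath.comp, ih]

/-- Homotopy of paths in the nerve `Σ_*(D)`: a 2-simplex of the nerve is a composable
pair `(f, g)` with faces `∂₂ = f`, `∂₀ = g`, `∂₁ = f ≫ g`; the identity 1-simplex
(degenerate) is identified with the empty path. -/
inductive NHomotopy {D : Type u} [Category.{v} D] :
    ∀ {a b : D}, NPath D a b → NPath D a b → Prop where
  | refl {a b : D} (p : NPath D a b) : NHomotopy p p
  | symm {a b : D} {p q : NPath D a b} : NHomotopy p q → NHomotopy q p
  | trans {a b : D} {p q r : NPath D a b} : NHomotopy p q → NHomotopy q r → NHomotopy p r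
  | comp_congr {a b c : D} {p p' : NPath D a b} {q q' : NPath D b c} :
      NHomotopy p p' → NHomotopy q q' → NHomotopy (p.comp q) (p'.comp q')
  | step {a b c : D} (f : a ⟶ b) (g : b ⟶ c) :
      NHomotopy (NPath.single (f ≫ g)) ((NPath.single f).comp (NPath.single g))
  | degen (a : D) : NHomotopy (NPath.single (𝟙 a)) (NPath.nil a)

/-- The homotopy groupoid of the nerve `Σ_*(D)`, as a category. -/
structure HoNerveCat (D : Type u) [Category.{v} D] : Type u where
  as : D

instance {D : Type u} [Category.{v} D] : Category.{max u v} (HoNerveCat D) where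
  Hom a b := Quot (@NHomotopy D _ a.as b.as)
  id a := Quot.mk _ (NPath.nil a.as)
  comp p q := Quot.lift₂ (fun p q => Quot.mk _ (NPath.comp p q))
    (fun _ _ _ h => Quot.sound (NHomotopy.comp_congr (NHomotopy.refl _) h))
    (fun _ _ _ h => Quot.sound (NHomotopy.comp_congr h (NHomotopy.refl _))) p q
  id_comp f := by
    induction f using Quot.ind with
    | _ p => exact congrArg (Quot.mk _) (NPath.nil_comp p)
  comp_id f := by
    induction f using Quot.ind with
    | _ p => exact congrArg (Quot.mk _) (by simp [NPath.comp])
  assoc f g h := by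
    induction f using Quot.ind with
    | _ p =>
    induction g using Quot.ind with
    | _ q =>
    induction h using Quot.ind with
    | _ r => exact congrArg (Quot.mk _) (NPath.comp_assoc p q r)

end PosetBundle

/-!
Evaluating a path of arrows as their composite identifies the homotopy groupoid of the nerve of
any category `D` with `D` itself: the homotopy relations of the nerve are exactly the composition
law.

On the symmetric side, a 1-simplex is a cospan `t₀ → s ← t₁`, which a functor `F` from `C` to a
groupoid sends to `F g₁ ≫ (F g₀)⁻¹`. Pushing the three faces of a 2-simplex to its top vertex
shows that this respects homotopy, so `F` extends to `HoSymCat C`. Conversely, each 1-simplex is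
inverted by its reverse and is homotopic to the image of `g₁` followed by the inverse of the
image of `g₀`. Hence `HoSymCat C` is a groupoid generated by the image of `C`, and it has the
universal property of the localization of `C` at all arrows.
-/

namespace PosetBundle

open CategoryTheory

universe v u v' u'

section Nerve

variable {D : Type u} [Category.{v} D]

namespace NPath

def eval {a : D} : ∀ {b : D}, NPath D a b → (a ⟶ b)
  | _, .nil _ => 𝟙 _
  | _, .cons f p => p.eval ≫ f

@[simp]
theorem eval_nil (a : D) : (nil a).eval = 𝟙 a := rfl

@[simp]
theorem eval_cons {a b c : D} (f : b ⟶ c) (p : NPath D a b) : (cons f p).eval = p.eval ≫ f :=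
  rfl

@[simp]
theorem eval_single {a b : D} (f : a ⟶ b) : (single f).eval = f := by
  simp [single]

@[simp]
theorem eval_comp {a b c : D} (p : NPath D a b) (q : NPath D b c) :
    (p.comp q).eval = p.eval ≫ q.eval := by
  induction q with
  | nil => simp [comp]
  | cons f q ih => simp [comp, ih]

theorem comp_single {a b c : D} (p : NPath D a b) (f : b ⟶ c) :
    p.comp (single f) = cons f p := by
  simp [single, comp]

end NPath

namespace NHomotopy

theorem eval_eq {a b : D} {p q : NPath D a b} (h : NHomotopy p q) : p.eval = q.eval := by
  induction h with
  | refl => rfl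
  | symm _ ih => exact ih.symm
  | trans _ _ ih₁ ih₂ => exact ih₁.trans ih₂
  | comp_congr _ _ ih₁ ih₂ => simp [ih₁, ih₂]
  | step f g => simp
  | degen a => simp

theorem single_eval {a b : D} (p : NPath D a b) : NHomotopy (NPath.single p.eval) p := by
  induction p with
  | nil => exact degen _
  | cons f p ih =>
    have h := (step p.eval f).trans (comp_congr ih (refl (NPath.single f)))
    rwa [NPath.comp_single] at h

end NHomotopy

namespace HoNerveCat

def eval : HoNerveCat D ⥤ D where
  obj a := a.as
  map := Quot.lift NPath.eval fun _ _ h => h.eval_eq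
  map_id _ := rfl
  map_comp f g := by
    induction f using Quot.ind
    induction g using Quot.ind
    exact NPath.eval_comp _ _

def incl : D ⥤ HoNerveCat D where
  obj a := ⟨a⟩
  map f := Quot.mk _ (NPath.single f)
  map_id a := Quot.sound (NHomotopy.degen a)
  map_comp f g := Quot.sound (NHomotopy.step f g)

theorem eval_comp_incl : eval ⋙ incl = 𝟭 (HoNerveCat D) := by
  refine Functor.hext (fun _ => rfl) fun _ _ f => ?_
  induction f using Quot.ind with
  | _ p => exact heq_of_eq (Quot.sound (NHomotopy.single_eval p))

theorem incl_comp_eval : incl ⋙ eval = 𝟭 D :=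
  Functor.hext (fun _ => rfl) fun _ _ f => heq_of_eq (NPath.eval_single f)

end HoNerveCat

end Nerve

section Symmetric

variable {C : Type u} [Category.{v} C] {G : Type u'} [Category.{v'} G] [IsGroupoid G]

theorem map_comp_inv_map_eq (F : C ⥤ G) {a b s t : C} (g₁ : a ⟶ s) (g₀ : b ⟶ s) (h : s ⟶ t) :
    F.map g₁ ≫ inv (F.map g₀) = F.map (g₁ ≫ h) ≫ inv (F.map (g₀ ≫ h)) := by
  simp

namespace CSimplex1

def swap (s : CSimplex1 C) : CSimplex1 C := ⟨s.t1, s.t0, s.s, s.g1, s.g0⟩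

def ofHom {a b : C} (f : a ⟶ b) : CSimplex1 C := ⟨b, a, b, 𝟙 b, f⟩

noncomputable def eval (F : C ⥤ G) (s : CSimplex1 C) : F.obj s.t1 ⟶ F.obj s.t0 :=
  F.map s.g1 ≫ inv (F.map s.g0)

end CSimplex1

theorem CSimplex2.eval_d1 (F : C ⥤ G) (c : CSimplex2 C) :
    c.d1.eval F = c.d2.eval F ≫ c.d0.eval F := by
  simp only [CSimplex1.eval, CSimplex2.d0, CSimplex2.d1, CSimplex2.d2]
  rw [map_comp_inv_map_eq F _ _ c.b02, map_comp_inv_map_eq F _ _ c.b01,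
    map_comp_inv_map_eq F _ _ c.b12, c.comm0, c.comm1, c.comm2]
  simp

namespace CPath

noncomputable def eval (F : C ⥤ G) {a : C} : ∀ {b : C}, CPath C a b → (F.obj a ⟶ F.obj b)
  | _, .nil _ => 𝟙 _
  | _, .cons s p => p.eval F ≫ s.eval F

@[simp]
theorem eval_nil (F : C ⥤ G) (a : C) : (nil a).eval F = 𝟙 (F.obj a) := rfl

@[simp]
theorem eval_cons (F : C ⥤ G) {a : C} (s : CSimplex1 C) (p : CPath C a s.t1) :
    (cons s p).eval F = p.eval F ≫ s.eval F := rfl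

@[simp]
theorem eval_single (F : C ⥤ G) (s : CSimplex1 C) : (single s).eval F = s.eval F := by
  simp [single]

@[simp]
theorem eval_comp (F : C ⥤ G) {a b c : C} (p : CPath C a b) (q : CPath C b c) :
    (p.comp q).eval F = p.eval F ≫ q.eval F := by
  induction q with
  | nil => simp [comp]
  | cons s q ih => simp [comp, ih]

theorem comp_single {a : C} (s : CSimplex1 C) (p : CPath C a s.t1) :
    p.comp (single s) = cons s p := by
  simp [single, comp]

end CPath

namespace CHomotopy

theorem eval_eq (F : C ⥤ G) {a b : C} {p q : CPath C a b} (h : CHomotopy p q) :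
    p.eval F = q.eval F := by
  induction h with
  | refl => rfl
  | symm _ ih => exact ih.symm
  | trans _ _ ih₁ ih₂ => exact ih₁.trans ih₂
  | comp_congr _ _ ih₁ ih₂ => simp [ih₁, ih₂]
  | step c =>
    rw [CPath.eval_single, c.eval_d1, ← CPath.eval_single F c.d2, ← CPath.eval_single F c.d0]
    exact (CPath.eval_comp F _ _).symm
  | degen a => simp [CPath.single, CSimplex1.eval]

theorem single_degenerate {a s : C} (g : a ⟶ s) :
    CHomotopy (CPath.single ⟨a, a, s, g, g⟩) (CPath.nil a) := by
  refine (step (⟨a, a, a, a, s, a, s, 𝟙 a, 𝟙 a, g, g, 𝟙 a, 𝟙 a, g, 𝟙 s, g,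
    by simp, by simp, by simp⟩ : CSimplex2 C)).trans ?_
  have h := comp_congr (degen a) (degen a)
  rwa [CPath.nil_comp] at h

theorem single_comp_single_swap (s : CSimplex1 C) :
    CHomotopy ((CPath.single s).comp (CPath.single s.swap)) (CPath.nil s.t1) :=
  (step ⟨s.t1, s.t0, s.t1, s.s, s.s, s.s, s.s, s.g1, s.g0, s.g1, s.g1, s.g0, s.g1,
    𝟙 s.s, 𝟙 s.s, 𝟙 s.s, rfl, rfl, rfl⟩).symm.trans (single_degenerate s.g1)

theorem single_ofHom (s : CSimplex1 C) :
    CHomotopy (CPath.single (CSimplex1.ofHom s.g1))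
      ((CPath.single s).comp (CPath.single (CSimplex1.ofHom s.g0))) :=
  step ⟨s.t1, s.t0, s.s, s.s, s.s, s.s, s.s, s.g1, s.g0, s.g1, 𝟙 s.s, s.g0, 𝟙 s.s,
    𝟙 s.s, 𝟙 s.s, 𝟙 s.s, by simp, by simp, by simp⟩

end CHomotopy

namespace HoSymCat

def homMk {a b : C} (p : CPath C a b) : (⟨a⟩ : HoSymCat C) ⟶ ⟨b⟩ :=
  Quot.mk _ p

theorem homMk_nil (a : C) : homMk (CPath.nil a) = 𝟙 _ := rfl

theorem homMk_cons {a : C} (s : CSimplex1 C) (p : CPath C a s.t1) :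
    homMk (CPath.cons s p) = homMk p ≫ homMk (CPath.single s) := by
  rw [← CPath.comp_single]
  rfl

theorem isIso_homMk_single (s : CSimplex1 C) : IsIso (homMk (CPath.single s)) :=
  ⟨homMk (CPath.single s.swap), Quot.sound (CHomotopy.single_comp_single_swap s),
    Quot.sound (CHomotopy.single_comp_single_swap s.swap)⟩

theorem isIso_homMk {a b : C} (p : CPath C a b) : IsIso (homMk p) := by
  induction p with
  | nil => rw [homMk_nil]; infer_instance
  | cons s p ih =>
    have := isIso_homMk_single s
    rw [homMk_cons]
    infer_instance

instance : IsGroupoid (HoSymCat C) where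
  all_isIso f := by
    induction f using Quot.ind with | _ p => exact isIso_homMk p

-- Reducible, so that instance search and rewriting see `incl.obj a` as `⟨a⟩`.
@[reducible]
def incl : C ⥤ HoSymCat C where
  obj a := ⟨a⟩
  map f := homMk (CPath.single (CSimplex1.ofHom f))
  map_id a := Quot.sound (CHomotopy.degen a)
  map_comp {a b c} f g := Quot.sound (CHomotopy.step
    ⟨a, b, c, b, c, c, c, f, 𝟙 b, f ≫ g, 𝟙 c, g, 𝟙 c, g, 𝟙 c, 𝟙 c, by simp, by simp, by simp⟩)

theorem homMk_single (s : CSimplex1 C) :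
    homMk (CPath.single s) = incl.map s.g1 ≫ inv (incl.map s.g0) :=
  (IsIso.eq_comp_inv (incl.map s.g0)).2 (Quot.sound (CHomotopy.single_ofHom s)).symm

noncomputable def lift (F : C ⥤ G) : HoSymCat C ⥤ G where
  obj a := F.obj a.as
  map := Quot.lift (CPath.eval F) fun _ _ h => h.eval_eq F
  map_id _ := rfl
  map_comp f g := by
    induction f using Quot.ind
    induction g using Quot.ind
    exact CPath.eval_comp F _ _

theorem incl_comp_lift (F : C ⥤ G) : incl ⋙ lift F = F :=
  Functor.hext (fun _ => rfl) fun _ _ f => heq_of_eq <| by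
    change (CPath.single (CSimplex1.ofHom f)).eval F = F.map f
    simp [CSimplex1.eval, CSimplex1.ofHom]

theorem functor_ext {E : Type u'} [Category.{v'} E] {G₁ G₂ : HoSymCat C ⥤ E}
    (h : incl ⋙ G₁ = incl ⋙ G₂) : G₁ = G₂ := by
  have hobj (a : C) : G₁.obj ⟨a⟩ = G₂.obj ⟨a⟩ := Functor.congr_obj h a
  suffices hmap : ∀ {a b : C} (p : CPath C a b),
      G₁.map (homMk p) = eqToHom (hobj a) ≫ G₂.map (homMk p) ≫ eqToHom (hobj b).symm by
    refine CategoryTheory.Functor.ext (fun x => hobj x.as) ?_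
    rintro ⟨a⟩ ⟨b⟩ f
    induction f using Quot.ind with | _ p => exact hmap p
  intro a b p
  induction p with
  | nil => simp [homMk_nil]
  | cons s p ih =>
    have h₁ := Functor.congr_hom h s.g1
    have h₀ := Functor.congr_hom h s.g0
    simp only [Functor.comp_map] at h₁ h₀
    rw [homMk_cons, homMk_single]
    simp only [Functor.map_comp, Functor.map_inv, ih, h₁, h₀]
    simp

theorem isInvertedBy_incl : (⊤ : MorphismProperty C).IsInvertedBy incl :=
  fun _ _ _ _ => IsGroupoid.all_isIso _

noncomputable def ofLocalization : (⊤ : MorphismProperty C).Localization ⥤ HoSymCat C :=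
  Localization.Construction.lift incl isInvertedBy_incl

theorem Q_comp_ofLocalization : (⊤ : MorphismProperty C).Q ⋙ ofLocalization = incl :=
  Localization.Construction.fac _ _

theorem ofLocalization_comp_lift : ofLocalization ⋙ lift (⊤ : MorphismProperty C).Q = 𝟭 _ := by
  apply Localization.Construction.uniq
  rw [← Functor.assoc, Q_comp_ofLocalization, incl_comp_lift, Functor.comp_id]

theorem lift_comp_ofLocalization :
    lift (⊤ : MorphismProperty C).Q ⋙ ofLocalization = 𝟭 (HoSymCat C) := by
  apply functor_ext
  rw [← Functor.assoc, incl_comp_lift, Q_comp_ofLocalization, Functor.comp_id]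

end HoSymCat

end Symmetric

end PosetBundle

open PosetBundle CategoryTheory in
/-- For a small category `C`, the homotopy groupoid of the nerve
`Σ_*(Ĉ)` of the category of fractions `Ĉ` (the localization of `C` inverting all
arrows) is isomorphic to the homotopy groupoid of the symmetric simplicial set
`Σ̃_*(C)`. -/
theorem homotopy_groupoid_of_fractions_iso_homotopy_groupoid_sym (C : Type) [SmallCategory C] :
    ∃ (F : HoNerveCat ((⊤ : MorphismProperty C).Localization) ⥤ HoSymCat C)
      (G : HoSymCat C ⥤ HoNerveCat ((⊤ : MorphismProperty C).Localization)),
      F ⋙ G = 𝟭 (HoNerveCat ((⊤ : MorphismProperty C).Localization)) ∧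
      G ⋙ F = 𝟭 (HoSymCat C) := by
  refine ⟨HoNerveCat.eval ⋙ HoSymCat.ofLocalization,
    HoSymCat.lift (⊤ : MorphismProperty C).Q ⋙ HoNerveCat.incl, ?_, ?_⟩
  · calc (HoNerveCat.eval ⋙ HoSymCat.ofLocalization) ⋙ HoSymCat.lift _ ⋙ HoNerveCat.incl
        = HoNerveCat.eval ⋙ (HoSymCat.ofLocalization ⋙ HoSymCat.lift _) ⋙ HoNerveCat.incl := rfl
      _ = HoNerveCat.eval ⋙ HoNerveCat.incl := by rw [HoSymCat.ofLocalization_comp_lift]; rfl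
      _ = 𝟭 _ := HoNerveCat.eval_comp_incl
  · calc (HoSymCat.lift _ ⋙ HoNerveCat.incl) ⋙ HoNerveCat.eval ⋙ HoSymCat.ofLocalization
        = HoSymCat.lift _ ⋙ (HoNerveCat.incl ⋙ HoNerveCat.eval) ⋙ HoSymCat.ofLocalization := rfl
      _ = HoSymCat.lift _ ⋙ HoSymCat.ofLocalization := by rw [HoNerveCat.incl_comp_eval]; rfl
      _ = 𝟭 _ := HoSymCat.lift_comp_ofLocalization
end

section
/- Let C be a small category and C° its opposite category. Then the homotopy groupoid π₁(C) of the symmetric simplicial set Σ̃_*(C) is isomorphic to the homotopy groupoid π₁(C°) of Σ̃_*(C°). -/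
/-!
In `π₁(C)` every 1-simplex `t₁ → s ← t₀` is homotopic to the zigzag "forward along
`t₁ ⟶ s`, then backward along `t₀ ⟶ s`", and the forward and backward edges of an arrow
are mutually inverse, functorial classes. So a functor `Dᵒᵖ ⥤ E` induces `π₁(D) ⥤ π₁(E)`
by sending the forward edge of an arrow to the backward edge of its image: a 2-simplex of
`Σ̃_*(D)` becomes a diagram in `E` with a common source `T` mapping to the three edge
objects, and restricting the spans along `T` turns the three zigzags into one another.
Applied to `𝟭 Cᵒᵖ` and to `unopUnop C`, the two functors swap forward and backward edges,
hence are mutually inverse.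
-/

namespace PosetBundle

open CategoryTheory

universe v₁ v₂ v₃ u₁ u₂ u₃

namespace HoSymCat

section Generators

variable {C : Type u₁} [Category.{v₁} C]

def ofPath {a b : C} (p : CPath C a b) : mk a ⟶ mk b :=
  Quot.mk _ p

theorem ofPath_comp {a b c : C} (p : CPath C a b) (q : CPath C b c) :
    ofPath (p.comp q) = ofPath p ≫ ofPath q :=
  rfl

/-- The class of the 1-simplex `a ⟶ b ← b`, a path from `a` to `b`. -/
def fwd {a b : C} (h : a ⟶ b) : mk a ⟶ mk b :=
  ofPath (CPath.single ⟨b, a, b, 𝟙 b, h⟩)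

/-- The class of the 1-simplex `b ⟶ b ← a`, a path from `b` to `a`. -/
def bwd {a b : C} (h : a ⟶ b) : mk b ⟶ mk a :=
  ofPath (CPath.single ⟨a, b, b, h, 𝟙 b⟩)

theorem ofPath_single_d1 (c : CSimplex2 C) :
    ofPath (CPath.single c.d1) = ofPath (CPath.single c.d2) ≫ ofPath (CPath.single c.d0) :=
  Quot.sound (CHomotopy.step c)

theorem fwd_id (a : C) : fwd (𝟙 a) = 𝟙 (mk a) :=
  Quot.sound (CHomotopy.degen a)

theorem bwd_id (a : C) : bwd (𝟙 a) = 𝟙 (mk a) :=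
  Quot.sound (CHomotopy.degen a)

theorem fwd_comp {a b c : C} (h : a ⟶ b) (k : b ⟶ c) : fwd (h ≫ k) = fwd h ≫ fwd k :=
  ofPath_single_d1 ⟨a, b, c, b, c, c, c, h, 𝟙 b, h ≫ k, 𝟙 c, k, 𝟙 c, k, 𝟙 c, 𝟙 c,
    by simp, by simp, by simp⟩

theorem bwd_comp {a b c : C} (h : a ⟶ b) (k : b ⟶ c) : bwd (h ≫ k) = bwd k ≫ bwd h :=
  ofPath_single_d1 ⟨c, b, a, c, c, b, c, 𝟙 c, k, 𝟙 c, h ≫ k, 𝟙 b, h, 𝟙 c, 𝟙 c, k,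
    by simp, by simp, by simp⟩

theorem fwd_bwd {a b : C} (h : a ⟶ b) : fwd h ≫ bwd h = 𝟙 (mk a) :=
  (ofPath_single_d1 ⟨a, b, a, b, a, b, b, h, 𝟙 b, 𝟙 a, 𝟙 a, 𝟙 b, h, 𝟙 b, h, 𝟙 b,
    by simp, by simp, by simp⟩).symm.trans (fwd_id a)

theorem bwd_fwd {a b : C} (h : a ⟶ b) : bwd h ≫ fwd h = 𝟙 (mk b) :=
  (ofPath_single_d1 ⟨b, a, b, b, b, b, b, 𝟙 b, h, 𝟙 b, 𝟙 b, h, 𝟙 b, 𝟙 b, 𝟙 b, 𝟙 b,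
    by simp, by simp, by simp⟩).symm.trans (fwd_id b)

theorem ofPath_single (s : CSimplex1 C) : ofPath (CPath.single s) = fwd s.g1 ≫ bwd s.g0 :=
  ofPath_single_d1 ⟨s.t1, s.s, s.t0, s.s, s.s, s.s, s.s, s.g1, 𝟙 s.s, s.g1, s.g0, 𝟙 s.s,
    s.g0, 𝟙 s.s, 𝟙 s.s, 𝟙 s.s, by simp, by simp, by simp⟩

theorem ofPath_cons {a : C} (s : CSimplex1 C) (p : CPath C a s.t1) :
    ofPath (CPath.cons s p) = ofPath p ≫ fwd s.g1 ≫ bwd s.g0 := by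
  rw [← ofPath_single, ← ofPath_comp, CPath.single, CPath.comp, CPath.comp]

theorem hom_induction {P : ∀ {X Y : HoSymCat C}, (X ⟶ Y) → Prop}
    (hid : ∀ X, P (𝟙 X)) (hcomp : ∀ {X Y Z} (f : X ⟶ Y) (g : Y ⟶ Z), P f → P g → P (f ≫ g))
    (hfwd : ∀ {a b : C} (h : a ⟶ b), P (fwd h)) (hbwd : ∀ {a b : C} (h : a ⟶ b), P (bwd h))
    {X Y : HoSymCat C} (f : X ⟶ Y) : P f := by
  have h_ofPath {a b : C} (p : CPath C a b) : P (ofPath p) := by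
    induction p with
    | nil => exact hid _
    | cons s p ih =>
      rw [ofPath_cons]
      exact hcomp _ _ ih (hcomp _ _ (hfwd _) (hbwd _))
  obtain ⟨a⟩ := X
  obtain ⟨b⟩ := Y
  exact Quot.ind h_ofPath f

theorem functor_ext_s1 {E : Type u₂} [Category.{v₂} E] {F G : HoSymCat C ⥤ E}
    (hobj : ∀ X, F.obj X = G.obj X)
    (hfwd : ∀ {a b : C} (h : a ⟶ b), F.map (fwd h) ≍ G.map (fwd h))
    (hbwd : ∀ {a b : C} (h : a ⟶ b), F.map (bwd h) ≍ G.map (bwd h)) :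
    F = G :=
  CategoryTheory.Functor.ext hobj fun _ _ f =>
    hom_induction (P := fun f => F.map f = eqToHom (hobj _) ≫ G.map f ≫ eqToHom (hobj _).symm)
      (fun _ => by simp) (fun _ _ hf hg => by simp [hf, hg])
      (fun h => (conj_eqToHom_iff_heq _ _ (hobj _) (hobj _)).2 (hfwd h))
      (fun h => (conj_eqToHom_iff_heq _ _ (hobj _) (hobj _)).2 (hbwd h)) f

theorem bwd_comp_fwd_restrict {t s a b : C} (r : t ⟶ s) (f : s ⟶ a) (g : s ⟶ b) :
    bwd (r ≫ f) ≫ fwd (r ≫ g) = bwd f ≫ fwd g := by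
  rw [bwd_comp, fwd_comp, Category.assoc, ← Category.assoc (bwd r), bwd_fwd,
    Category.id_comp]

theorem fwd_comp_bwd_of_comm {t x y z : C} {r : t ⟶ x} {s : t ⟶ y} {f : x ⟶ z} {g : y ⟶ z}
    (w : r ≫ f = s ≫ g) : fwd f ≫ bwd g = bwd r ≫ fwd s := by
  calc fwd f ≫ bwd g = bwd r ≫ fwd (r ≫ f) ≫ bwd g := by
        rw [fwd_comp, Category.assoc, ← Category.assoc (bwd r), bwd_fwd, Category.id_comp]
    _ = bwd r ≫ fwd (s ≫ g) ≫ bwd g := by rw [w]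
    _ = bwd r ≫ fwd s := by rw [fwd_comp, Category.assoc, fwd_bwd, Category.comp_id]

theorem bwd_comp_fwd_of_cone {v₀ v₁ v₂ e₀₁ e₀₂ e₁₂ t : C}
    {a₀₀₁ : e₀₁ ⟶ v₀} {a₁₀₁ : e₀₁ ⟶ v₁} {a₀₀₂ : e₀₂ ⟶ v₀} {a₂₀₂ : e₀₂ ⟶ v₂}
    {a₁₁₂ : e₁₂ ⟶ v₁} {a₂₁₂ : e₁₂ ⟶ v₂} {b₀₁ : t ⟶ e₀₁} {b₀₂ : t ⟶ e₀₂} {b₁₂ : t ⟶ e₁₂}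
    (h₀ : b₀₁ ≫ a₀₀₁ = b₀₂ ≫ a₀₀₂) (h₁ : b₀₁ ≫ a₁₀₁ = b₁₂ ≫ a₁₁₂)
    (h₂ : b₀₂ ≫ a₂₀₂ = b₁₂ ≫ a₂₁₂) :
    bwd a₀₀₂ ≫ fwd a₂₀₂ = (bwd a₀₀₁ ≫ fwd a₁₀₁) ≫ bwd a₁₁₂ ≫ fwd a₂₁₂ := by
  calc bwd a₀₀₂ ≫ fwd a₂₀₂ = bwd (b₀₂ ≫ a₀₀₂) ≫ fwd (b₀₂ ≫ a₂₀₂) :=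
        (bwd_comp_fwd_restrict _ _ _).symm
    _ = bwd a₀₀₁ ≫ (bwd b₀₁ ≫ fwd b₁₂) ≫ fwd a₂₁₂ := by
        rw [← h₀, h₂, bwd_comp, fwd_comp]; simp only [Category.assoc]
    _ = (bwd a₀₀₁ ≫ fwd a₁₀₁) ≫ bwd a₁₁₂ ≫ fwd a₂₁₂ := by
        rw [← fwd_comp_bwd_of_comm h₁]; simp only [Category.assoc]

end Generators

section MapOp

variable {D : Type u₁} [Category.{v₁} D] {E : Type u₂} [Category.{v₂} E] (F : Dᵒᵖ ⥤ E)

def mapOpPath : ∀ {a b : D}, CPath D a b → (mk (F.obj (.op a)) ⟶ mk (F.obj (.op b)))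
  | _, _, .nil _ => 𝟙 _
  | _, _, .cons s p => mapOpPath p ≫ bwd (F.map s.g1.op) ≫ fwd (F.map s.g0.op)

theorem mapOpPath_comp {a b c : D} (p : CPath D a b) (q : CPath D b c) :
    mapOpPath F (p.comp q) = mapOpPath F p ≫ mapOpPath F q := by
  induction q with
  | nil => simp [CPath.comp, mapOpPath]
  | cons s q ih => simp [CPath.comp, mapOpPath, ih]

theorem mapOpPath_single (s : CSimplex1 D) :
    mapOpPath F (CPath.single s) = bwd (F.map s.g1.op) ≫ fwd (F.map s.g0.op) := by
  rw [CPath.single, mapOpPath, mapOpPath, Category.id_comp]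

theorem mapOpPath_congr {a b : D} {p q : CPath D a b} (h : CHomotopy p q) :
    mapOpPath F p = mapOpPath F q := by
  induction h with
  | refl => rfl
  | symm _ ih => exact ih.symm
  | trans _ _ ih₁ ih₂ => exact ih₁.trans ih₂
  | comp_congr _ _ ih₁ ih₂ => rw [mapOpPath_comp, mapOpPath_comp, ih₁, ih₂]
  | step c =>
    refine Eq.trans ?_ (mapOpPath_comp F (CPath.single c.d2) (CPath.single c.d0)).symm
    simp only [mapOpPath_single, CSimplex2.d0, CSimplex2.d1, CSimplex2.d2]
    exact bwd_comp_fwd_of_cone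
      (by rw [← F.map_comp, ← F.map_comp, ← op_comp, ← op_comp, c.comm0])
      (by rw [← F.map_comp, ← F.map_comp, ← op_comp, ← op_comp, c.comm1])
      (by rw [← F.map_comp, ← F.map_comp, ← op_comp, ← op_comp, c.comm2])
  | degen a => simp [CPath.single, mapOpPath, fwd_id, bwd_id]

def mapOp : HoSymCat D ⥤ HoSymCat E where
  obj X := mk (F.obj (.op X.as))
  map f := Quot.lift (mapOpPath F) (fun _ _ => mapOpPath_congr F) f
  map_id X := by
    change mapOpPath F (CPath.nil X.as) = _
    rw [mapOpPath]
  map_comp f g := by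
    induction f using Quot.ind
    induction g using Quot.ind
    exact mapOpPath_comp F _ _

theorem mapOp_map_fwd {a b : D} (h : a ⟶ b) : (mapOp F).map (fwd h) = bwd (F.map h.op) := by
  change mapOpPath F (CPath.single _) = _
  rw [mapOpPath_single, op_id, F.map_id, fwd_id, Category.comp_id]

theorem mapOp_map_bwd {a b : D} (h : a ⟶ b) : (mapOp F).map (bwd h) = fwd (F.map h.op) := by
  change mapOpPath F (CPath.single _) = _
  rw [mapOpPath_single, op_id, F.map_id, bwd_id, Category.id_comp]

variable {D' : Type u₃} [Category.{v₃} D'] (G : Eᵒᵖ ⥤ D')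

theorem mapOp_map_mapOp_map_fwd {a b : D} (h : a ⟶ b) :
    (mapOp G).map ((mapOp F).map (fwd h)) = fwd (G.map (F.map h.op).op) :=
  (congrArg (mapOp G).map (mapOp_map_fwd F h)).trans (mapOp_map_bwd G _)

theorem mapOp_map_mapOp_map_bwd {a b : D} (h : a ⟶ b) :
    (mapOp G).map ((mapOp F).map (bwd h)) = bwd (G.map (F.map h.op).op) :=
  (congrArg (mapOp G).map (mapOp_map_bwd F h)).trans (mapOp_map_fwd G _)

end MapOp

end HoSymCat

end PosetBundle

open PosetBundle CategoryTheory in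
/-- For a small category `C`, the homotopy groupoid `π₁(C)` of the
symmetric simplicial set `Σ̃_*(C)` is isomorphic to the homotopy groupoid `π₁(C°)`
of `Σ̃_*(C°)`, where `C°` is the opposite category. -/
theorem homotopy_groupoid_iso_homotopy_groupoid_op (C : Type) [SmallCategory C] :
    ∃ (F : HoSymCat C ⥤ HoSymCat Cᵒᵖ) (G : HoSymCat Cᵒᵖ ⥤ HoSymCat C),
      F ⋙ G = 𝟭 (HoSymCat C) ∧ G ⋙ F = 𝟭 (HoSymCat Cᵒᵖ) := by
  open HoSymCat in
  exact ⟨mapOp (𝟭 Cᵒᵖ), mapOp (unopUnop C),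
    functor_ext_s1 (fun _ => rfl) (fun h => heq_of_eq (mapOp_map_mapOp_map_fwd _ _ h))
      (fun h => heq_of_eq (mapOp_map_mapOp_map_bwd _ _ h)),
    functor_ext_s1 (fun _ => rfl) (fun h => heq_of_eq (mapOp_map_mapOp_map_fwd _ _ h))
      (fun h => heq_of_eq (mapOp_map_mapOp_map_bwd _ _ h))⟩
end
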